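/- arXiv:2203.04655 — 3 statements merged into one kernel-verified Lean document; each statement's English description precedes it below -/
import Mathlib

section
/- For every η in [-1/2,1/2]² \ {0}, the limit as N→∞ of the symmetric partial sums over lattice points l ∈ ℤ² with |l|_∞ ≤ N of (η+l)^⊥/|η+l|^{3-ε} exists, where 0 < ε < 1 and x^⊥ = (-x₂, x₁). -/
/-!
Write `p = 3 - ε > 2` and `T x = |x|^(-p) • x`. Pairing `l` with `-l` turns the summand into
`T (l + η) - T (l - η)`, and since the derivative of `T` at `x` has size `|x|^(-p)`, this
difference is `O(|η| |l|^(-p))`, which is summable over `ℤ²` because `p > 2`. The symmetric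
boxes are invariant under `l ↦ -l`, so their partial sums are partial sums of the paired series.
Identifying `ℝ²` with `ℂ`, `x ↦ x^⊥` is multiplication by `I`, a continuous linear map, and
passes to the limit.
-/

open Filter Topology

lemma abs_rpow_neg_sub_rpow_neg_le {p m a b : ℝ} (hp : 0 ≤ p) (hm : 0 < m) (ha : m ≤ a)
    (hb : m ≤ b) : |a ^ (-p) - b ^ (-p)| ≤ p * m ^ (-p - 1) * |a - b| := by
  have hderiv : ∀ t ∈ Set.Ici m,
      HasDerivWithinAt (fun t : ℝ => t ^ (-p)) (-p * t ^ (-p - 1)) (Set.Ici m) t := fun t ht =>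
    (Real.hasDerivAt_rpow_const (Or.inl (hm.trans_le ht).ne')).hasDerivWithinAt
  have hbound : ∀ t ∈ Set.Ici m, ‖-p * t ^ (-p - 1)‖ ≤ p * m ^ (-p - 1) := fun t ht => by
    have ht0 : 0 < t := hm.trans_le ht
    rw [norm_mul, norm_neg, Real.norm_of_nonneg hp, Real.norm_of_nonneg (by positivity)]
    exact mul_le_mul_of_nonneg_left (Real.rpow_le_rpow_of_nonpos hm ht (by linarith)) hp
  simpa only [Real.norm_eq_abs] using
    (convex_Ici m).norm_image_sub_le_of_norm_hasDerivWithin_le hderiv hbound hb ha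

section NormedSpace

variable {E : Type*} [NormedAddCommGroup E] [NormedSpace ℝ E]

lemma norm_rpow_neg_smul_sub_rpow_neg_smul_le {p m : ℝ} (hp : 0 ≤ p) (hm : 0 < m) {x y : E}
    (hx : m ≤ ‖x‖) (hy : m ≤ ‖y‖) :
    ‖‖x‖ ^ (-p) • x - ‖y‖ ^ (-p) • y‖ ≤ (m ^ (-p) + p * m ^ (-p - 1) * ‖y‖) * ‖x - y‖ := by
  have hsplit : ‖x‖ ^ (-p) • x - ‖y‖ ^ (-p) • y
      = ‖x‖ ^ (-p) • (x - y) + (‖x‖ ^ (-p) - ‖y‖ ^ (-p)) • y := by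
    rw [smul_sub, sub_smul]; abel
  have hx' : ‖x‖ ^ (-p) ≤ m ^ (-p) := Real.rpow_le_rpow_of_nonpos hm hx (by linarith)
  have hdiff : |‖x‖ ^ (-p) - ‖y‖ ^ (-p)| ≤ p * m ^ (-p - 1) * ‖x - y‖ :=
    (abs_rpow_neg_sub_rpow_neg_le hp hm hx hy).trans
      (mul_le_mul_of_nonneg_left (abs_norm_sub_norm_le x y) (by positivity))
  calc ‖‖x‖ ^ (-p) • x - ‖y‖ ^ (-p) • y‖
      ≤ ‖x‖ ^ (-p) * ‖x - y‖ + |‖x‖ ^ (-p) - ‖y‖ ^ (-p)| * ‖y‖ := by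
        rw [hsplit]
        refine (norm_add_le _ _).trans_eq ?_
        rw [norm_smul, norm_smul, Real.norm_of_nonneg (by positivity), Real.norm_eq_abs]
    _ ≤ m ^ (-p) * ‖x - y‖ + p * m ^ (-p - 1) * ‖x - y‖ * ‖y‖ := by gcongr
    _ = (m ^ (-p) + p * m ^ (-p - 1) * ‖y‖) * ‖x - y‖ := by ring

lemma norm_rpow_neg_smul_add_rpow_neg_smul_le {p : ℝ} (hp : 0 ≤ p) (x : E) {v : E} (hv : v ≠ 0)
    (h : 2 * ‖x‖ ≤ ‖v‖) :
    ‖‖x + v‖ ^ (-p) • (x + v) + ‖x - v‖ ^ (-p) • (x - v)‖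
      ≤ 2 ^ (p + 1) * (1 + 3 * p) * ‖x‖ * ‖v‖ ^ (-p) := by
  set m := ‖v‖ / 2 with hm_def
  have hm : 0 < m := by positivity
  have hodd : ‖x - v‖ ^ (-p) • (x - v) = -(‖v - x‖ ^ (-p) • (v - x)) := by
    rw [norm_sub_rev, ← smul_neg, neg_sub]
  have hplus : m ≤ ‖v + x‖ := by
    have := norm_sub_norm_le v (-x)
    rw [norm_neg, sub_neg_eq_add] at this
    linarith
  have hminus : m ≤ ‖v - x‖ := by linarith [norm_sub_norm_le v x]
  have hminus' : ‖v - x‖ ≤ 3 * m := by linarith [norm_sub_le v x]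
  have hscale : m ^ (-p) = 2 ^ p * ‖v‖ ^ (-p) := by
    rw [Real.div_rpow (norm_nonneg v) zero_le_two, Real.rpow_neg zero_le_two, div_inv_eq_mul,
      mul_comm]
  calc ‖‖x + v‖ ^ (-p) • (x + v) + ‖x - v‖ ^ (-p) • (x - v)‖
      = ‖‖v + x‖ ^ (-p) • (v + x) - ‖v - x‖ ^ (-p) • (v - x)‖ := by
        rw [hodd, add_comm x v, ← sub_eq_add_neg]
    _ ≤ (m ^ (-p) + p * m ^ (-p - 1) * ‖v - x‖) * ‖(v + x) - (v - x)‖ :=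
        norm_rpow_neg_smul_sub_rpow_neg_smul_le hp hm hplus hminus
    _ ≤ (m ^ (-p) + p * m ^ (-p - 1) * (3 * m)) * (2 * ‖x‖) := by
        gcongr
        rw [add_sub_sub_cancel, ← two_smul ℝ x, norm_smul, Real.norm_two]
    _ = 2 ^ (p + 1) * (1 + 3 * p) * ‖x‖ * ‖v‖ ^ (-p) := by
        rw [Real.rpow_sub_one hm.ne', Real.rpow_add_one two_ne_zero, hscale]
        field_simp

lemma summable_rpow_neg_smul_add_rpow_neg_smul [CompleteSpace E] {α : Type*} {p : ℝ} (hp : 0 ≤ p)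
    (x : E) {ι : α → E} (hι : Tendsto (fun a => ‖ι a‖) cofinite atTop)
    (hsum : Summable fun a => ‖ι a‖ ^ (-p)) :
    Summable fun a => ‖x + ι a‖ ^ (-p) • (x + ι a) + ‖x - ι a‖ ^ (-p) • (x - ι a) := by
  refine (hsum.mul_left (2 ^ (p + 1) * (1 + 3 * p) * ‖x‖)).of_norm_bounded_eventually ?_
  filter_upwards [hι.eventually_gt_atTop 0, hι.eventually_ge_atTop (2 * ‖x‖)] with a hpos hge
  exact norm_rpow_neg_smul_add_rpow_neg_smul_le hp x (norm_pos_iff.mp hpos) hge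

end NormedSpace

lemma tendsto_sum_of_summable_add_neg {α E ι : Type*} [AddCommGroup α] [AddCommGroup E]
    [TopologicalSpace E] [IsTopologicalAddGroup E] [Module ℝ E] [ContinuousConstSMul ℝ E]
    {f : α → E} (hf : Summable fun a => f a + f (-a)) {l : Filter ι} {s : ι → Finset α}
    (hs : Tendsto s l atTop) (hneg : ∀ i, ∀ a ∈ s i, -a ∈ s i) :
    Tendsto (fun i => ∑ a ∈ s i, f a) l (𝓝 ((2 : ℝ)⁻¹ • ∑' a, (f a + f (-a)))) := by
  have hsymm : ∀ i, ∑ a ∈ s i, f a = (2 : ℝ)⁻¹ • ∑ a ∈ s i, (f a + f (-a)) := fun i => by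
    have hreflect : ∑ a ∈ s i, f (-a) = ∑ a ∈ s i, f a :=
      Finset.sum_nbij' Neg.neg Neg.neg (hneg i) (hneg i) (fun a _ => neg_neg a)
        (fun a _ => neg_neg a) (fun a _ => rfl)
    rw [Finset.sum_add_distrib, hreflect, ← two_smul ℝ, smul_smul, inv_mul_cancel₀ two_ne_zero,
      one_smul]
  simpa only [hsymm, Function.comp_def] using (hf.hasSum.comp hs).const_smul (2 : ℝ)⁻¹

lemma summable_norm_rpow_neg_int_prod {p : ℝ} (hp : 2 < p) :
    Summable fun l : ℤ × ℤ => ‖l‖ ^ (-p) := by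
  refine ((EisensteinSeries.summable_one_div_norm_rpow hp).comp_injective
    (finTwoArrowEquiv ℤ).symm.injective).congr fun l => ?_
  simp [EisensteinSeries.norm_eq_max_natAbs, Prod.norm_def, Int.norm_eq_abs]

lemma tendsto_Icc_prod_Icc_neg :
    Tendsto (fun N : ℕ => Finset.Icc (-(N : ℤ)) N ×ˢ Finset.Icc (-(N : ℤ)) N) atTop atTop := by
  have hdiag : Tendsto (fun N : ℕ => ((N : ℤ), (N : ℤ))) atTop atTop := by
    rw [← prod_atTop_atTop_eq]
    exact tendsto_natCast_atTop_atTop.prodMk tendsto_natCast_atTop_atTop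
  exact (Finset.tendsto_Icc_neg_atTop_atTop.comp hdiag).congr fun N => rfl

def latticePoint (l : ℤ × ℤ) : ℂ := l.1 + l.2 * Complex.I

lemma latticePoint_neg (l : ℤ × ℤ) : latticePoint (-l) = -latticePoint l := by
  simp only [latticePoint, Prod.fst_neg, Prod.snd_neg, Int.cast_neg]
  ring

lemma norm_le_norm_latticePoint (l : ℤ × ℤ) : ‖l‖ ≤ ‖latticePoint l‖ := by
  have hre := Complex.abs_re_le_norm (latticePoint l)
  have him := Complex.abs_im_le_norm (latticePoint l)
  simp only [latticePoint, Complex.add_re, Complex.intCast_re, Complex.mul_re, Complex.intCast_im,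
    Complex.I_re, Complex.I_im, Complex.add_im, Complex.mul_im] at hre him ⊢
  simp only [Prod.norm_def, Int.norm_eq_abs]
  exact max_le (by simpa using hre) (by simpa using him)

lemma tendsto_norm_latticePoint_cofinite_atTop :
    Tendsto (fun l => ‖latticePoint l‖) cofinite atTop := by
  have hint : Tendsto (fun l : ℤ × ℤ => ‖l‖) cofinite atTop := by
    rw [← cocompact_eq_cofinite]
    exact tendsto_norm_cocompact_atTop
  exact tendsto_atTop_mono norm_le_norm_latticePoint hint

lemma summable_norm_latticePoint_rpow_neg {p : ℝ} (hp : 2 < p) :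
    Summable fun l => ‖latticePoint l‖ ^ (-p) := by
  refine (summable_norm_rpow_neg_int_prod hp).of_norm_bounded_eventually ?_
  filter_upwards [eventually_cofinite_ne 0] with l hl
  rw [Real.norm_of_nonneg (by positivity)]
  exact Real.rpow_le_rpow_of_nonpos (norm_pos_iff.mpr hl) (norm_le_norm_latticePoint l)
    (by linarith)

theorem stmt0_general (ε : ℝ) (hε1 : ε < 1) (η : ℝ × ℝ) :
    ∃ L : ℝ × ℝ, Tendsto (fun N : ℕ =>
        ∑ l ∈ Finset.Icc (-(N:ℤ)) (N:ℤ) ×ˢ Finset.Icc (-(N:ℤ)) (N:ℤ),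
          (Real.sqrt ((η.1 + (l.1 : ℝ))^2 + (η.2 + (l.2 : ℝ))^2)) ^ (-(3 - ε)) •
            ((-(η.2 + (l.2 : ℝ)), η.1 + (l.1 : ℝ)) : ℝ × ℝ))
      atTop (nhds L) := by
  set z : ℂ := ⟨η.1, η.2⟩
  set f : ℤ × ℤ → ℂ := fun l => ‖z + latticePoint l‖ ^ (-(3 - ε)) • (z + latticePoint l)
  have hf : Summable fun l => f l + f (-l) := by
    simpa only [f, latticePoint_neg, ← sub_eq_add_neg] using
      summable_rpow_neg_smul_add_rpow_neg_smul (by linarith) z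
        tendsto_norm_latticePoint_cofinite_atTop (summable_norm_latticePoint_rpow_neg (by linarith))
  have hbox := tendsto_sum_of_summable_add_neg hf tendsto_Icc_prod_Icc_neg fun N l hl => by
    simp only [Finset.mem_product, Finset.mem_Icc, Prod.fst_neg, Prod.snd_neg] at hl ⊢
    omega
  let rot : ℂ →L[ℝ] ℝ × ℝ :=
    Complex.equivRealProdCLM.toContinuousLinearMap ∘L ContinuousLinearMap.mul ℝ ℂ Complex.I
  have hterm : ∀ l : ℤ × ℤ, rot (f l) = (Real.sqrt ((η.1 + (l.1 : ℝ))^2 + (η.2 + (l.2 : ℝ))^2))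
      ^ (-(3 - ε)) • ((-(η.2 + (l.2 : ℝ)), η.1 + (l.1 : ℝ)) : ℝ × ℝ) := fun l => by
    have hnorm : ‖z + latticePoint l‖ = Real.sqrt ((η.1 + (l.1 : ℝ))^2 + (η.2 + (l.2 : ℝ))^2) := by
      simp [Complex.norm_eq_sqrt_sq_add_sq, latticePoint, z]
    simp only [rot, f, map_smul, hnorm]
    congr 1
    ext <;> simp [latticePoint, z]
  refine ⟨rot ((2 : ℝ)⁻¹ • ∑' l, (f l + f (-l))), ?_⟩
  simpa only [Function.comp_def, map_sum, hterm] using (rot.continuous.tendsto _).comp hbox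

/-- For every `η ∈ [-1/2,1/2]² \ {0}`, the limit as `N → ∞` of the symmetric
partial sums `∑_{|l|_∞ ≤ N} (η+l)^⊥ / |η+l|^{3-ε}` exists, where `0 < ε < 1` and
`x^⊥ = (-x₂, x₁)`. -/
theorem stmt0 (ε : ℝ) (hε : 0 < ε) (hε1 : ε < 1)
    (η : ℝ × ℝ) (hη : η ∈ Set.Icc ((-(1:ℝ)/2, -(1:ℝ)/2)) ((1/2 : ℝ), (1/2 : ℝ)))
    (hη0 : η ≠ 0) :
    ∃ L : ℝ × ℝ, Tendsto (fun N : ℕ =>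
        ∑ l ∈ Finset.Icc (-(N:ℤ)) (N:ℤ) ×ˢ Finset.Icc (-(N:ℤ)) (N:ℤ),
          (Real.sqrt ((η.1 + (l.1 : ℝ))^2 + (η.2 + (l.2 : ℝ))^2)) ^ (-(3 - ε)) •
            ((-(η.2 + (l.2 : ℝ)), η.1 + (l.1 : ℝ)) : ℝ × ℝ))
      atTop (nhds L) :=
  stmt0_general ε hε1 η
end

section
/- Let K : ℝ² → ℝ² satisfy |K(x)| ≤ C/|x|^{2-ε} for all x ≠ 0, where 0 < ε < 1. Then for every φ ∈ C_c²(ℝ²), the function H_φ(x,y) = (1/2) K(x-y) · (∇φ(x) - ∇φ(y)) belongs to L²(ℝ² × ℝ²). -/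
/-!
Write `z = x - y`. The growth bound on `K`, together with the fact that `∇φ` is Lipschitz and
bounded, gives `|H_φ(x, y)| ≤ c · min (|z| ^ (ε - 1)) (|z| ^ (ε - 2))`, and `H_φ(x, y) = 0` unless
`x` or `y` lies in the compact set `S = tsupport ∇φ`. Hence, by Tonelli and translation invariance,
`∬ |H_φ|² ≤ 2 |S| ∫ c² min (|z| ^ (2ε - 2)) (|z| ^ (2ε - 4)) dz`, which is finite in the plane
since `2ε - 2 > -2` near the origin and `2ε - 4 < -2` at infinity.
-/

open scoped Classical

open MeasureTheory Set Module
open scoped ENNReal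

theorem integrable_min_norm_rpow {E : Type*} [NormedAddCommGroup E] [NormedSpace ℝ E]
    [FiniteDimensional ℝ E] [Nontrivial E] [MeasurableSpace E] [BorelSpace E]
    (μ : Measure E) [μ.IsAddHaarMeasure] {a b : ℝ}
    (ha : -(finrank ℝ E : ℝ) < a) (hb : b < -(finrank ℝ E : ℝ)) :
    Integrable (fun x : E => min (‖x‖ ^ a) (‖x‖ ^ b)) μ := by
  have hdim : ((finrank ℝ E - 1 : ℕ) : ℝ) = finrank ℝ E - 1 := by
    rw [Nat.cast_pred finrank_pos]
  rw [integrable_fun_norm_addHaar μ (f := fun r => min (r ^ a) (r ^ b)),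
    ← Ioc_union_Ioi_eq_Ioi zero_le_one]
  refine IntegrableOn.union ?_ ?_
  · have : IntegrableOn (fun y : ℝ => y ^ (a + (finrank ℝ E - 1 : ℕ))) (Ioc 0 1) := by
      rw [← intervalIntegrable_iff_integrableOn_Ioc_of_le zero_le_one]
      exact intervalIntegral.intervalIntegrable_rpow' (by rw [hdim]; linarith)
    refine this.congr_fun (fun y ⟨hy0, hy1⟩ => ?_) measurableSet_Ioc
    beta_reduce
    rw [min_eq_left (Real.rpow_le_rpow_of_exponent_ge hy0 hy1 (by linarith)), smul_eq_mul,
      Real.rpow_add hy0, Real.rpow_natCast, mul_comm]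
  · have : IntegrableOn (fun y : ℝ => y ^ (b + (finrank ℝ E - 1 : ℕ))) (Ioi 1) :=
      integrableOn_Ioi_rpow_of_lt (by rw [hdim]; linarith) zero_lt_one
    refine this.congr_fun (fun y (hy : 1 < y) => ?_) measurableSet_Ioi
    beta_reduce
    rw [min_eq_right (Real.rpow_le_rpow_of_exponent_le hy.le (by linarith)), smul_eq_mul,
      Real.rpow_add (zero_lt_one.trans hy), Real.rpow_natCast, mul_comm]

theorem memLp_min_norm_rpow {E : Type*} [NormedAddCommGroup E] [NormedSpace ℝ E]
    [FiniteDimensional ℝ E] [Nontrivial E] [MeasurableSpace E] [BorelSpace E]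
    (μ : Measure E) [μ.IsAddHaarMeasure] {p : ℝ≥0∞} (hp0 : p ≠ 0) (hp : p ≠ ∞) {a b : ℝ}
    (ha : -(finrank ℝ E : ℝ) < a * p.toReal) (hb : b * p.toReal < -(finrank ℝ E : ℝ)) :
    MemLp (fun x : E => min (‖x‖ ^ a) (‖x‖ ^ b)) p μ := by
  have hmeas : AEStronglyMeasurable (fun x : E => min (‖x‖ ^ a) (‖x‖ ^ b)) μ := by
    fun_prop
  refine (integrable_norm_rpow_iff hmeas hp0 hp).1 ((integrable_min_norm_rpow μ ha hb).congr ?_)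
  refine .of_forall fun x => ?_
  have hq : 0 ≤ p.toReal := ENNReal.toReal_nonneg
  have hx := norm_nonneg x
  beta_reduce
  rw [Real.norm_of_nonneg (by positivity), Real.rpow_mul hx, Real.rpow_mul hx]
  rcases le_total (‖x‖ ^ a) (‖x‖ ^ b) with h | h
  · rw [min_eq_left h, min_eq_left (Real.rpow_le_rpow (by positivity) h hq)]
  · rw [min_eq_right h, min_eq_right (Real.rpow_le_rpow (by positivity) h hq)]

theorem HasCompactSupport.exists_norm_sub_le_mul_min_one {E F : Type*} [NormedAddCommGroup E]
    [NormedSpace ℝ E] [NormedAddCommGroup F] [NormedSpace ℝ F] {g : E → F}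
    (hg : HasCompactSupport g) (hg₁ : ContDiff ℝ 1 g) :
    ∃ A : ℝ, ∀ x y, ‖g x - g y‖ ≤ A * min ‖x - y‖ 1 := by
  obtain ⟨L, hL⟩ := ContDiff.lipschitzWith_of_hasCompactSupport hg hg₁ one_ne_zero
  obtain ⟨M, hM⟩ := hg.exists_bound_of_continuous hg₁.continuous
  refine ⟨max (L : ℝ) (2 * M), fun x y => ?_⟩
  rw [mul_min_of_nonneg _ _ (le_max_of_le_left L.coe_nonneg), mul_one]
  refine le_min ?_ ?_
  · calc ‖g x - g y‖ ≤ L * ‖x - y‖ := hL.norm_sub_le x y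
      _ ≤ max (L : ℝ) (2 * M) * ‖x - y‖ := by gcongr; exact le_max_left _ _
  · calc ‖g x - g y‖ ≤ ‖g x‖ + ‖g y‖ := norm_sub_le _ _
      _ ≤ 2 * M := by linarith [hM x, hM y]
      _ ≤ max (L : ℝ) (2 * M) := le_max_right _ _

section Gradient

variable {E : Type*} [NormedAddCommGroup E] [InnerProductSpace ℝ E] [CompleteSpace E]
  {φ : E → ℝ}

theorem HasCompactSupport.gradient (hφ : HasCompactSupport φ) : HasCompactSupport (gradient φ) :=
  (hφ.fderiv ℝ).comp_left (map_zero _)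

theorem ContDiff.gradient {n : WithTop ℕ∞} (hφ : ContDiff ℝ (n + 1) φ) :
    ContDiff ℝ n (gradient φ) :=
  (InnerProductSpace.toDual ℝ E).symm.contDiff.comp (hφ.fderiv_right le_rfl)

end Gradient

theorem memLp_prod_of_norm_le_comp_sub {G F : Type*} [AddCommGroup G] [MeasurableSpace G]
    [MeasurableAdd₂ G] [MeasurableNeg G] [NormedAddCommGroup F] {μ : Measure G} [SFinite μ]
    [μ.IsAddLeftInvariant] [μ.IsNegInvariant] {p : ℝ≥0∞} (hp0 : p ≠ 0) (hp : p ≠ ∞)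
    {f : G × G → F} {k : G → ℝ} {S : Set G} (hf : AEStronglyMeasurable f (μ.prod μ))
    (hk : MemLp k p μ) (hS : MeasurableSet S) (hμS : μ S ≠ ∞)
    (hfk : ∀ x y, ‖f (x, y)‖ ≤ k (x - y)) (hfS : Function.support f ⊆ S ×ˢ univ ∪ univ ×ˢ S) :
    MemLp f p (μ.prod μ) := by
  set h : G → ℝ≥0∞ := fun z => ‖k z‖ₑ ^ p.toReal
  set χ : G → ℝ≥0∞ := S.indicator 1
  have hI : ∫⁻ z, h z ∂μ < ∞ := lintegral_rpow_enorm_lt_top_of_eLpNorm_lt_top hp0 hp hk.2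
  have hh : AEMeasurable (fun q : G × G => h (q.1 - q.2)) (μ.prod μ) :=
    (hk.1.enorm.pow_const _).comp_quasiMeasurePreserving (quasiMeasurePreserving_sub μ μ)
  have hχ : Measurable χ := measurable_const.indicator hS
  have hm₁ : AEMeasurable (fun q : G × G => χ q.1 * h (q.1 - q.2)) (μ.prod μ) :=
    (hχ.comp measurable_fst).aemeasurable.mul hh
  have hm₂ : AEMeasurable (fun q : G × G => χ q.2 * h (q.1 - q.2)) (μ.prod μ) :=
    (hχ.comp measurable_snd).aemeasurable.mul hh
  have hχ_ne_top : ∀ x, χ x ≠ ∞ := fun x => by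
    simp only [χ, indicator]; split_ifs <;> simp
  have hpoint : ∀ q : G × G, ‖f q‖ₑ ^ p.toReal ≤ (χ q.1 + χ q.2) * h (q.1 - q.2) := by
    rintro ⟨x, y⟩
    by_cases hq : f (x, y) = 0
    · simp [hq, ENNReal.zero_rpow_of_pos (ENNReal.toReal_pos hp0 hp)]
    have hbound : ‖f (x, y)‖ₑ ^ p.toReal ≤ h (x - y) := by
      change _ ≤ ‖k (x - y)‖ₑ ^ p.toReal
      gcongr
      exact enorm_le_iff_norm_le.2 ((hfk x y).trans (Real.le_norm_self _))
    refine hbound.trans (le_mul_of_one_le_left' ?_)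
    rcases hfS hq with ⟨hx, -⟩ | ⟨-, hy⟩
    · exact le_add_right (by simp [χ, hx])
    · exact le_add_left (by simp [χ, hy])
  have hleft : ∫⁻ q, χ q.1 * h (q.1 - q.2) ∂μ.prod μ = μ S * ∫⁻ z, h z ∂μ := by
    rw [lintegral_prod _ hm₁]
    simp_rw [lintegral_const_mul' _ _ (hχ_ne_top _), lintegral_sub_left_eq_self]
    rw [lintegral_mul_const _ hχ, lintegral_indicator_one hS]
  have hright : ∫⁻ q, χ q.2 * h (q.1 - q.2) ∂μ.prod μ = μ S * ∫⁻ z, h z ∂μ := by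
    rw [lintegral_prod_symm _ hm₂]
    simp_rw [lintegral_const_mul' _ _ (hχ_ne_top _), lintegral_sub_right_eq_self]
    rw [lintegral_mul_const _ hχ, lintegral_indicator_one hS]
  refine ⟨hf, (eLpNorm_lt_top_iff_lintegral_rpow_enorm_lt_top hp0 hp).2 ?_⟩
  calc ∫⁻ q, ‖f q‖ₑ ^ p.toReal ∂μ.prod μ
      ≤ ∫⁻ q, (χ q.1 + χ q.2) * h (q.1 - q.2) ∂μ.prod μ := lintegral_mono hpoint
    _ = μ S * ∫⁻ z, h z ∂μ + μ S * ∫⁻ z, h z ∂μ := by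
      simp_rw [add_mul]
      rw [lintegral_add_left' hm₁, hleft, hright]
    _ < ∞ := by
      have := ENNReal.mul_lt_top hμS.lt_top hI
      exact ENNReal.add_lt_top.2 ⟨this, this⟩

theorem norm_half_inner_le_mul_min_rpow {E : Type*} [NormedAddCommGroup E]
    [InnerProductSpace ℝ E] {u v : E} {r s C A : ℝ} (hr : 0 < r) (hu : ‖u‖ ≤ C / r ^ s)
    (hv : ‖v‖ ≤ A * min r 1) :
    ‖(1 / 2 : ℝ) * inner ℝ u v‖ ≤ C * A / 2 * min (r ^ (1 - s)) (r ^ (-s)) := by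
  have hmin : min (r ^ (1 - s)) (r ^ (-s)) = min r 1 / r ^ s := by
    rw [← min_div_div_right (by positivity), Real.rpow_sub hr, Real.rpow_one,
      Real.rpow_neg hr.le, one_div]
  calc ‖(1 / 2 : ℝ) * inner ℝ u v‖ ≤ 1 / 2 * (‖u‖ * ‖v‖) := by
        rw [norm_mul, Real.norm_of_nonneg (by norm_num)]
        gcongr
        exact norm_inner_le_norm _ _
    _ ≤ 1 / 2 * (C / r ^ s * (A * min r 1)) := by
        gcongr
        exact (norm_nonneg _).trans hu
    _ = C * A / 2 * min (r ^ (1 - s)) (r ^ (-s)) := by rw [hmin]; ring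

/-- Let `K : ℝ² → ℝ²` satisfy `|K(x)| ≤ C/|x|^{2-ε}` for all `x ≠ 0`, where
`0 < ε < 1`. Then for every `φ ∈ C²_c(ℝ²)`, the function
`H_φ(x,y) = (1/2) ⟨K(x-y), ∇φ(x) - ∇φ(y)⟩` (set to `0` on the diagonal) belongs to
`L²(ℝ² × ℝ²)`. -/
theorem stmt3 (ε : ℝ) (hε : 0 < ε) (hε1 : ε < 1)
    (C : ℝ) (K : EuclideanSpace ℝ (Fin 2) → EuclideanSpace ℝ (Fin 2))
    (hK : ∀ x : EuclideanSpace ℝ (Fin 2), x ≠ 0 → ‖K x‖ ≤ C / ‖x‖ ^ (2 - ε))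
    (hKm : Measurable K)
    (φ : EuclideanSpace ℝ (Fin 2) → ℝ) (hφ : ContDiff ℝ 2 φ) (hφc : HasCompactSupport φ) :
    MemLp (fun p : EuclideanSpace ℝ (Fin 2) × EuclideanSpace ℝ (Fin 2) =>
        if p.1 = p.2 then 0 else
          (1/2) * (inner ℝ (K (p.1 - p.2)) (gradient φ p.1 - gradient φ p.2) : ℝ))
      2 volume := by
  set G := gradient φ
  have hG : ContDiff ℝ 1 G := ContDiff.gradient (n := 1) hφ
  have hGc : HasCompactSupport G := hφc.gradient
  obtain ⟨A, hA⟩ := hGc.exists_norm_sub_le_mul_min_one hG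
  have hdim : (finrank ℝ (EuclideanSpace ℝ (Fin 2)) : ℝ) = 2 := by simp
  refine memLp_prod_of_norm_le_comp_sub two_ne_zero ENNReal.ofNat_ne_top
    (k := fun z => C * A / 2 * min (‖z‖ ^ (1 - (2 - ε))) (‖z‖ ^ (-(2 - ε)))) ?_
    (.const_mul (memLp_min_norm_rpow volume two_ne_zero ENNReal.ofNat_ne_top ?_ ?_) _)
    (isClosed_tsupport G).measurableSet hGc.measure_lt_top.ne ?_ ?_
  · refine (Measurable.ite (isClosed_eq continuous_fst continuous_snd).measurableSet
      measurable_const ?_).aestronglyMeasurable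
    exact ((hKm.comp (measurable_fst.sub measurable_snd)).inner
      ((hG.continuous.measurable.comp measurable_fst).sub
        (hG.continuous.measurable.comp measurable_snd))).const_mul _
  · rw [hdim, ENNReal.toReal_ofNat]; linarith
  · rw [hdim, ENNReal.toReal_ofNat]; linarith
  · intro x y
    by_cases hxy : x = y
    · simp [hxy, Real.zero_rpow (by linarith : 1 - (2 - ε) ≠ 0),
        Real.zero_rpow (by linarith : ε - 2 ≠ 0)]
    rw [if_neg hxy]
    exact norm_half_inner_le_mul_min_rpow (norm_pos_iff.2 (sub_ne_zero.2 hxy))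
      (hK _ (sub_ne_zero.2 hxy)) (hA x y)
  · rintro ⟨x, y⟩ hxy
    by_contra hout
    simp only [mem_union, mem_prod, mem_univ, and_true, true_and, not_or] at hout
    simp [image_eq_zero_of_notMem_tsupport hout.1, image_eq_zero_of_notMem_tsupport hout.2]
      at hxy
end

section
/- Let X₂ be a Polish space continuously and injectively embedded in a topological measurable space X₁ whose Borel σ-algebra is countably generated and separates points. If every open ball of X₂ can be written as X₂ ∩ B for some B in the Borel σ-algebra of X₁, then the Borel σ-algebra of X₂ equals the trace σ-algebra 𝓑(X₁) ∩ X₂. -/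
theorem stmt10_general (X₂ : Type*) [MetricSpace X₂] [CompleteSpace X₂]
    [TopologicalSpace.SeparableSpace X₂] [m₂ : MeasurableSpace X₂] [BorelSpace X₂]
    (X₁ : Type*) [m₁ : MeasurableSpace X₁]
    [MeasurableSpace.CountablyGenerated X₁] [MeasurableSpace.SeparatesPoints X₁]
    (ι : X₂ → X₁) (hinj : Function.Injective ι) (hmeas : Measurable ι) :
    m₂ = MeasurableSpace.comap ι m₁ :=
  (hmeas.measurableEmbedding hinj).comap_eq.symm

/-- Let `X₂` be a Polish (complete separable metric) space continuously and
injectively embedded via a measurable map `ι` in a measurable space `X₁` whose σ-algebra is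
countably generated and separates points. If every open ball of `X₂` can be written as
`X₂ ∩ B = ι⁻¹(B)` for some `B ∈ 𝓑(X₁)`, then the Borel σ-algebra of `X₂` equals the trace
σ-algebra `𝓑(X₁) ∩ X₂`, i.e. the comap of `𝓑(X₁)` along `ι`. -/
theorem stmt10 (X₂ : Type*) [MetricSpace X₂] [CompleteSpace X₂]
    [TopologicalSpace.SeparableSpace X₂] [m₂ : MeasurableSpace X₂] [BorelSpace X₂]
    (X₁ : Type*) [m₁ : MeasurableSpace X₁]
    [MeasurableSpace.CountablyGenerated X₁] [MeasurableSpace.SeparatesPoints X₁]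
    (ι : X₂ → X₁) (hinj : Function.Injective ι) (hmeas : Measurable ι)
    (hball : ∀ (x : X₂) (r : ℝ), ∃ B : Set X₁, MeasurableSet B ∧ Metric.ball x r = ι ⁻¹' B) :
    m₂ = MeasurableSpace.comap ι m₁ :=
  stmt10_general X₂ (m₂ := m₂) X₁ (m₁ := m₁) ι hinj hmeas
end
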